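/- arXiv:2007.16029 — 2 statements merged into one kernel-verified Lean document; each statement's English description precedes it below -/
import Mathlib

section
/- With eigenvalues β_1,…,β_t of the QC code C and V_i matrices whose rows form bases of the corresponding eigenspaces, the matrix H whose block rows are H_i = (1, β_i, …, β_i^{m−1}) ⊗ V_i has rank mℓ − dim_{F_q}(C), satisfies H c^T = 0 for all c ∈ C, and is therefore a parity-check matrix for C. -/
set_option maxHeartbeats 1000000

open Polynomial

/-- The polynomial of a length-`m` vector. -/
noncomputable def toPoly {F : Type*} [Field F] {m : ℕ} (v : Fin m → F) : Polynomial F :=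
  ∑ k : Fin m, C (v k) * X ^ (k : ℕ)

section AuxLemmas

variable {F : Type*} [Field F] {m : ℕ}

lemma toPoly_coeff (v : Fin m → F) (k : ℕ) :
    (toPoly v).coeff k = if h : k < m then v ⟨k, h⟩ else 0 := by
  classical
  rw [toPoly]
  simp only [finset_sum_coeff, coeff_C_mul, coeff_X_pow, mul_ite, mul_one, mul_zero]
  split
  · next h =>
    rw [Finset.sum_eq_single (⟨k, h⟩ : Fin m)]
    · simp
    · intro b _ hb
      simp only [ite_eq_right_iff]
      intro hbk
      exact absurd (Fin.ext hbk.symm) hb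
    · simp
  · next h =>
    apply Finset.sum_eq_zero
    intro b _
    simp only [ite_eq_right_iff]
    intro hbk
    exact absurd (hbk ▸ b.isLt) h

lemma toPoly_degree_lt (v : Fin m → F) : (toPoly v).degree < (m : ℕ) := by
  apply Polynomial.degree_lt_iff_coeff_zero _ _ |>.2
  intro k hk
  rw [toPoly_coeff, dif_neg (by omega)]

lemma toPoly_coeff_eq_self {g : Polynomial F} (hg : g.degree < (m : ℕ)) :
    toPoly (fun k : Fin m => g.coeff k) = g := by
  ext k
  rw [toPoly_coeff]
  split
  · rfl
  · next h =>
    exact (Polynomial.coeff_eq_zero_of_degree_lt (lt_of_lt_of_le hg (by exact_mod_cast by omega))).symm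

lemma toPoly_add (u v : Fin m → F) : toPoly (u + v) = toPoly u + toPoly v := by
  rw [toPoly, toPoly, toPoly, ← Finset.sum_add_distrib]
  exact Finset.sum_congr rfl fun k _ => by simp [add_mul]

lemma toPoly_smul (a : F) (v : Fin m → F) : toPoly (a • v) = C a * toPoly v := by
  rw [toPoly, toPoly, Finset.mul_sum]
  exact Finset.sum_congr rfl fun k _ => by simp [mul_assoc]

lemma aux_finrank_spanK_le {K M : Type*} [Field K] [Algebra F K]
    [AddCommGroup M] [Module K M] [Module F M] [IsScalarTower F K M]
    (X : Submodule F M) [FiniteDimensional F X] :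
    Module.finrank K (Submodule.span K (X : Set M)) ≤ Module.finrank F X := by
  classical
  set d := Module.finrank F X with hd
  let b : Module.Basis (Fin d) F X := Module.finBasis F X
  have hspan : Submodule.span K (X : Set M) = Submodule.span K (Set.range fun i => (b i : M)) := by
    apply le_antisymm
    · rw [Submodule.span_le]
      intro x hx
      have hx' : ((⟨x, hx⟩ : X) : M) = ((∑ i, b.repr ⟨x, hx⟩ i • b i : X) : M) := by
        rw [b.sum_repr ⟨x, hx⟩]
      simp only [Submodule.coe_sum, Submodule.coe_smul] at hx'
      rw [show x = ∑ i, b.repr ⟨x, hx⟩ i • (b i : M) from hx']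
      refine Submodule.sum_mem _ fun i _ => ?_
      rw [← algebraMap_smul K (b.repr ⟨x, hx⟩ i) ((b i : M))]
      exact Submodule.smul_mem _ _ (Submodule.subset_span ⟨i, rfl⟩)
    · rw [Submodule.span_le]
      rintro x ⟨i, rfl⟩
      exact Submodule.subset_span (b i).2
  rw [hspan]
  exact (finrank_span_le_card _).trans (by
    rw [Set.toFinset_range]
    exact (Finset.card_image_le).trans (by simp))

lemma aux_finrank_submodule_pi {K : Type*} [Field K] {ι : Type*} [Fintype ι]
    {φ : ι → Type*} [∀ i, AddCommGroup (φ i)] [∀ i, Module K (φ i)]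
    (p : ∀ i, Submodule K (φ i)) [∀ i, Module.Finite K (p i)] :
    Module.finrank K (Submodule.pi Set.univ p) = ∑ i, Module.finrank K (p i) := by
  let e : (Submodule.pi Set.univ p) ≃ₗ[K] (∀ i, p i) :=
    { toFun := fun x i => ⟨x.1 i, x.2 i (Set.mem_univ i)⟩
      invFun := fun g => ⟨fun i => g i, fun i _ => (g i).2⟩
      map_add' := fun x y => rfl
      map_smul' := fun c x => rfl
      left_inv := fun x => rfl
      right_inv := fun g => rfl }
  rw [e.finrank_eq, Module.finrank_pi_fintype]

noncomputable def AdjoinRoot.liftHom {R S : Type*} [CommRing R] [CommRing S] [Algebra R S]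
    (f : R[X]) (x : S) (hfx : aeval x f = 0) : AdjoinRoot f →ₐ[R] S :=
  AdjoinRoot.liftAlgHom f (Algebra.ofId R S) x hfx

@[simp] lemma AdjoinRoot.liftHom_mk {R S : Type*} [CommRing R] [CommRing S] [Algebra R S]
    {f : R[X]} {x : S} {hfx : aeval x f = 0} {g : R[X]} :
    AdjoinRoot.liftHom f x hfx (AdjoinRoot.mk f g) = aeval x g := rfl

@[simp] lemma AdjoinRoot.liftHom_root {R S : Type*} [CommRing R] [CommRing S] [Algebra R S]
    {f : R[X]} {x : S} {hfx : aeval x f = 0} :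
    AdjoinRoot.liftHom f x hfx (AdjoinRoot.root f) = x :=
  AdjoinRoot.liftAlgHom_root f _ x hfx

end AuxLemmas

theorem stmt11 (F : Type*) [Field F] (m ℓ t : ℕ) (hm : 0 < m)
    (hmq : (m : F) ≠ 0)
    -- the splitting field of x^m − 1 over F
    (K : Type*) [Field K] [Algebra F K]
    [Polynomial.IsSplittingField F K (X ^ m - C 1 : Polynomial F)]
    -- the reduced Gröbner basis matrix G̃(x) of the QC code C
    (G : Matrix (Fin ℓ) (Fin ℓ) (Polynomial F))
    (htri : ∀ i j : Fin ℓ, j < i → G i j = 0)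
    (hdeg : ∀ i j : Fin ℓ, i < j → (G i j).degree < (G j j).degree)
    (hdvd : ∀ j : Fin ℓ, G j j ∣ X ^ m - C 1)
    (hcol : ∀ j : Fin ℓ, G j j = X ^ m - C 1 → ∀ i : Fin ℓ, i ≠ j → G i j = 0)
    (hker : ∀ j : Fin ℓ, (fun k => if k = j then X ^ m - C 1 else 0) ∈
      Submodule.span (Polynomial F) (Set.range fun i => G i))
    -- β_1, …, β_t are the (distinct) eigenvalues of C, the roots of det G̃(x)
    (β : Fin t → K) (hβinj : Function.Injective β)
    (hβ : ∀ γ : K, Polynomial.aeval γ G.det = 0 ↔ ∃ i, β i = γ)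
    -- V_i is a matrix whose rows form a basis of the eigenspace of β_i
    (n : Fin t → ℕ) (V : ∀ i, Matrix (Fin (n i)) (Fin ℓ) K)
    (hVli : ∀ i, LinearIndependent K (fun a => V i a))
    (hVsp : ∀ i, Submodule.span K (Set.range fun a => V i a) =
      LinearMap.ker (Matrix.mulVecLin (fun a b : Fin ℓ => Polynomial.aeval (β i) (G a b)))) :
    -- H = (block rows (1, β_i, …, β_i^{m−1}) ⊗ V_i), as a matrix over K with rows
    -- indexed by Σ_i Fin (n_i) and columns indexed by Fin m × Fin ℓ
    -- (1) H·cᵀ = 0 for every codeword c of C,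
    (∀ c : Fin m → Fin ℓ → F,
      (fun j : Fin ℓ => AdjoinRoot.mk (X ^ m - C 1 : Polynomial F) (toPoly fun i => c i j)) ∈
        Submodule.span (AdjoinRoot (X ^ m - C 1 : Polynomial F))
          (Set.range fun i : Fin ℓ =>
            fun j : Fin ℓ => AdjoinRoot.mk (X ^ m - C 1 : Polynomial F) (G i j)) →
      ∀ (i : Fin t) (a : Fin (n i)),
        ∑ k : Fin m, ∑ j : Fin ℓ,
          β i ^ (k : ℕ) * V i a j * algebraMap F K (c k j) = 0) ∧
    -- (2) H has rank mℓ − dim_{F_q}(C),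
    Matrix.rank (Matrix.of fun (p : (i : Fin t) × Fin (n i)) (q : Fin m × Fin ℓ) =>
        β p.1 ^ (q.1 : ℕ) * V p.1 p.2 q.2)
      = m * ℓ - Module.finrank F
          ↥(Submodule.span (AdjoinRoot (X ^ m - C 1 : Polynomial F))
            (Set.range fun i : Fin ℓ =>
              fun j : Fin ℓ => AdjoinRoot.mk (X ^ m - C 1 : Polynomial F) (G i j))) ∧
    -- (3) hence H is a parity-check matrix for C: c ∈ C iff H·cᵀ = 0
    (∀ c : Fin m → Fin ℓ → F,
      ((fun j : Fin ℓ => AdjoinRoot.mk (X ^ m - C 1 : Polynomial F) (toPoly fun i => c i j)) ∈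
        Submodule.span (AdjoinRoot (X ^ m - C 1 : Polynomial F))
          (Set.range fun i : Fin ℓ =>
            fun j : Fin ℓ => AdjoinRoot.mk (X ^ m - C 1 : Polynomial F) (G i j)) ↔
      ∀ (i : Fin t) (a : Fin (n i)),
        ∑ k : Fin m, ∑ j : Fin ℓ,
          β i ^ (k : ℕ) * V i a j * algebraMap F K (c k j) = 0)) := by
  classical
  have hm' : m ≠ 0 := hm.ne'
  set p : Polynomial F := X ^ m - C 1 with hpdef
  have hpm : p.Monic := monic_X_pow_sub_C 1 hm'
  have hpdeg : p.degree = (m : ℕ) := degree_X_pow_sub_C hm 1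
  have hp0 : p ≠ 0 := hpm.ne_zero
  haveI : FiniteDimensional F K := IsSplittingField.finiteDimensional K p
  have hmK : (m : K) ≠ 0 := by
    intro h
    apply hmq
    apply (algebraMap F K).injective
    rw [map_natCast, map_zero, h]
  -- the m distinct m-th roots of unity in K
  set q : Polynomial K := p.map (algebraMap F K) with hqdef
  have hq : q = X ^ m - C 1 := by
    rw [hqdef, hpdef, Polynomial.map_sub, Polynomial.map_pow, Polynomial.map_X, Polynomial.map_C,
      map_one]
  have hq0 : q ≠ 0 := by rw [hq]; exact (monic_X_pow_sub_C 1 hm').ne_zero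
  have hqdeg : q.natDegree = m := by rw [hq, natDegree_X_pow_sub_C]
  have hqsplits : Splits q :=
    (IsSplittingField.splits K p)
  have hsep : q.Separable := by rw [hq]; exact separable_X_pow_sub_C 1 hmK one_ne_zero
  have hcard : Multiset.card q.roots = m := by rw [← hqdeg]; exact splits_iff_card_roots.1 hqsplits
  set S : Finset K := q.roots.toFinset with hSdef
  have hScard : S.card = m := by
    rw [hSdef, Multiset.toFinset_card_of_nodup (nodup_roots hsep), hcard]
  let eS : {x // x ∈ S} ≃ Fin m := S.equivFinOfCardEq hScard
  set ζ : Fin m → K := fun r => ((eS.symm r : {x // x ∈ S}) : K) with hζdef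
  have hζinj : Function.Injective ζ := fun a b h => eS.symm.injective (Subtype.ext h)
  have hSroot : ∀ γ ∈ S, γ ^ m = 1 := by
    intro γ hγ
    rw [hSdef, Multiset.mem_toFinset] at hγ
    have h2 := (mem_roots hq0).1 hγ
    rw [hq] at h2
    simp only [IsRoot.def, eval_sub, eval_pow, eval_X, eval_C] at h2
    exact sub_eq_zero.mp h2
  have hζroot : ∀ r, ζ r ^ m = 1 := fun r => hSroot _ (eS.symm r).2
  have hζall : ∀ γ : K, γ ^ m = 1 → ∃ r, ζ r = γ := by
    intro γ hγ
    have hγS : γ ∈ S := by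
      rw [hSdef, Multiset.mem_toFinset, mem_roots hq0, hq]
      simp [IsRoot.def, hγ]
    exact ⟨eS ⟨γ, hγS⟩, by rw [hζdef]; simp⟩
  have haev : ∀ γ : K, γ ^ m = 1 → aeval γ p = 0 := by
    intro γ hγ
    rw [hpdef]
    simp [hγ]
  -- eigenvalues are roots of unity
  have hdetprod : G.det = ∏ j, G j j :=
    Matrix.det_of_upperTriangular (fun i j h => htri i j h)
  have hβm : ∀ i, β i ^ m = 1 := by
    intro i
    have hz := (hβ (β i)).2 ⟨i, rfl⟩
    rw [hdetprod, map_prod] at hz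
    obtain ⟨j, -, hj⟩ := Finset.prod_eq_zero_iff.1 hz
    obtain ⟨c, hc⟩ := hdvd j
    have hpz : aeval (β i) p = 0 := by rw [hc, map_mul, hj, zero_mul]
    rw [hpdef] at hpz
    simp only [map_sub, map_pow, aeval_X, aeval_C, map_one, sub_eq_zero] at hpz
    exact hpz
  have hβζ : ∀ i, ∃ r, ζ r = β i := fun i => hζall _ (hβm i)
  choose e he using hβζ
  have heinj : Function.Injective e := fun a b h => hβinj (by rw [← he a, ← he b, h])
  -- evaluation of toPoly
  have hEVpoly : ∀ (γ : K) (hγ : aeval γ p = 0) (v : Fin m → F),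
      AdjoinRoot.liftHom p γ hγ (AdjoinRoot.mk p (toPoly v))
        = ∑ k : Fin m, algebraMap F K (v k) * γ ^ (k : ℕ) := by
    intro γ hγ v
    rw [AdjoinRoot.liftHom_mk, toPoly, map_sum]
    exact Finset.sum_congr rfl fun k _ => by simp
  -- the code as a submodule
  set gen : Fin ℓ → (Fin ℓ → AdjoinRoot p) := fun i => fun j => AdjoinRoot.mk p (G i j)
    with hgen
  set CR : Submodule (AdjoinRoot p) (Fin ℓ → AdjoinRoot p) :=
    Submodule.span (AdjoinRoot p) (Set.range gen) with hCRdef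
  -- Part 1 core: eigenvector orthogonality
  have hP1 : ∀ v ∈ CR, ∀ (i : Fin t) (a : Fin (n i)),
      ∑ j, V i a j * (AdjoinRoot.liftHom p (β i) (haev _ (hβm i))) (v j) = 0 := by
    intro v hv i a
    induction hv using Submodule.span_induction with
    | mem x hx =>
      obtain ⟨i0, rfl⟩ := hx
      have hmem : V i a ∈ LinearMap.ker
          (Matrix.mulVecLin (fun a b : Fin ℓ => aeval (β i) (G a b))) := by
        rw [← hVsp i]; exact Submodule.subset_span ⟨a, rfl⟩
      have hcomp := congrFun (LinearMap.mem_ker.1 hmem) i0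
      simp only [Matrix.mulVecLin_apply, Matrix.mulVec, dotProduct, Pi.zero_apply] at hcomp
      rw [← hcomp]
      refine Finset.sum_congr rfl fun j _ => ?_
      rw [hgen]
      simp only [AdjoinRoot.liftHom_mk]
      ring
    | zero => simp
    | add x y hx hy ihx ihy =>
      simp only [Pi.add_apply, map_add, mul_add, Finset.sum_add_distrib, ihx, ihy, add_zero]
    | smul r x hx ih =>
      simp only [Pi.smul_apply, smul_eq_mul, map_mul]
      calc ∑ j, V i a j * ((AdjoinRoot.liftHom p (β i) (haev _ (hβm i))) r *
              (AdjoinRoot.liftHom p (β i) (haev _ (hβm i))) (x j))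
          = (AdjoinRoot.liftHom p (β i) (haev _ (hβm i))) r *
            ∑ j, V i a j * (AdjoinRoot.liftHom p (β i) (haev _ (hβm i))) (x j) := by
            rw [Finset.mul_sum]; exact Finset.sum_congr rfl fun j _ => by ring
        _ = 0 := by rw [ih, mul_zero]
  -- the evaluation linear map at all roots of unity
  let EVl : (Fin ℓ → AdjoinRoot p) →ₗ[F] (Fin m → Fin ℓ → K) :=
    { toFun := fun v r j => AdjoinRoot.liftHom p (ζ r) (haev _ (hζroot r)) (v j)
      map_add' := fun u v => by funext r j; simp
      map_smul' := fun a v => by funext r j; simp }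
  have hEVapp : ∀ (v : Fin ℓ → AdjoinRoot p) (r : Fin m) (j : Fin ℓ),
      EVl v r j = AdjoinRoot.liftHom p (ζ r) (haev _ (hζroot r)) (v j) := fun _ _ _ => rfl
  -- injectivity of evaluation
  have hEinj : ∀ z : AdjoinRoot p,
      (∀ r, AdjoinRoot.liftHom p (ζ r) (haev _ (hζroot r)) z = 0) → z = 0 := by
    intro z hz
    obtain ⟨f, rfl⟩ := AdjoinRoot.mk_surjective z
    set g : Polynomial F := f %ₘ p with hgdef
    have hgm : AdjoinRoot.mk p g = AdjoinRoot.mk p f := by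
      rw [hgdef, ← AdjoinRoot.modByMonicHom_mk hpm f]
      exact AdjoinRoot.mk_leftInverse hpm _
    have hgdeg : g.degree < (m : ℕ) := by
      rw [hgdef, ← hpdeg]; exact degree_modByMonic_lt f hpm
    have hgK : g.map (algebraMap F K) = 0 := by
      apply eq_zero_of_natDegree_lt_card_of_eval_eq_zero _ hζinj
      · intro r
        rw [eval_map, ← aeval_def, ← AdjoinRoot.liftHom_mk (hfx := haev _ (hζroot r)) (g := g), hgm]
        exact hz r
      · rw [Fintype.card_fin, natDegree_map]
        rcases eq_or_ne g 0 with h | h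
        · simpa [h] using hm
        · exact_mod_cast (degree_eq_natDegree h) ▸ hgdeg
    have hg0 : g = 0 := by
      have : Function.Injective (algebraMap F K) := (algebraMap F K).injective
      rwa [Polynomial.map_eq_zero_iff this] at hgK
    rw [← hgm, hg0, map_zero]
  have hEVinj : Function.Injective EVl := by
    rw [← LinearMap.ker_eq_bot]
    rw [Submodule.eq_bot_iff]
    intro v hv
    rw [LinearMap.mem_ker] at hv
    funext j
    apply hEinj
    intro r
    have := congrFun (congrFun hv r) j
    rwa [hEVapp] at this
  -- evaluated matrices and row spaces
  set Gr : Fin m → Matrix (Fin ℓ) (Fin ℓ) K :=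
    (fun r => Matrix.of fun i j => aeval (ζ r) (G i j)) with hGr
  set rs : Fin m → Submodule K (Fin ℓ → K) :=
    (fun r => Submodule.span K (Set.range (Gr r))) with hrs
  set D : Submodule K (Fin m → Fin ℓ → K) := Submodule.pi Set.univ rs with hD
  set CRF : Submodule F (Fin ℓ → AdjoinRoot p) := CR.restrictScalars F with hCRF
  set Xs : Submodule F (Fin m → Fin ℓ → K) := Submodule.map EVl CRF with hXs
  -- the span of the evaluated code over K is exactly D
  have hXD : Submodule.span K (Xs : Set (Fin m → Fin ℓ → K)) = D := by
    apply le_antisymm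
    · rw [Submodule.span_le]
      rintro x ⟨v, hv, rfl⟩
      have hv' : v ∈ CR := hv
      clear hv
      have key : ∀ r, EVl v r ∈ rs r := by
        intro r
        induction hv' using Submodule.span_induction with
        | mem x hx =>
          obtain ⟨i0, rfl⟩ := hx
          have : EVl (gen i0) r = Gr r i0 := by
            funext j
            rw [hEVapp, hgen, AdjoinRoot.liftHom_mk]
            rfl
          rw [this]
          exact Submodule.subset_span ⟨i0, rfl⟩
        | zero => simpa using Submodule.zero_mem (rs r)
        | add x y hx hy ihx ihy =>
          have : EVl (x + y) r = EVl x r + EVl y r := by rw [map_add]; rfl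
          rw [this]; exact Submodule.add_mem _ ihx ihy
        | smul c x hx ih =>
          have : EVl (c • x) r =
              (AdjoinRoot.liftHom p (ζ r) (haev _ (hζroot r)) c) • (EVl x r) := by
            funext j
            rw [hEVapp]
            simp only [Pi.smul_apply, smul_eq_mul, map_mul]
            rfl
          rw [this]; exact Submodule.smul_mem _ _ ih
      intro r _
      exact key r
    · intro w hw
      have hu : ∀ r : Fin m, ∃ u : Fin ℓ → K, ∑ i0, u i0 • Gr r i0 = w r := by
        intro r
        have := hw r (Set.mem_univ r)
        rw [hrs] at this
        exact (Submodule.mem_span_range_iff_exists_fun (R := K)).1 this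
      choose u hu using hu
      -- interpolation via the Vandermonde matrix
      set Vd : Matrix (Fin m) (Fin m) K := Matrix.vandermonde ζ with hVd
      have hVdet : IsUnit Vd.det := by
        rw [hVd, Matrix.det_vandermonde, isUnit_iff_ne_zero]
        apply Finset.prod_ne_zero_iff.2
        intro i _
        apply Finset.prod_ne_zero_iff.2
        intro j hj
        rw [Finset.mem_Ioi] at hj
        exact sub_ne_zero.2 fun hc => absurd (hζinj hc) (ne_of_gt hj)
      set lam : Fin ℓ → Fin m → K := fun i0 => (Vd⁻¹).mulVec (fun r => u r i0) with hlam
      have hlamv : ∀ (i0 : Fin ℓ) (r : Fin m), ∑ s : Fin m, lam i0 s * ζ r ^ (s : ℕ) = u r i0 := by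
        intro i0 r
        have : Vd.mulVec (lam i0) = fun r => u r i0 := by
          rw [hlam, Matrix.mulVec_mulVec, Matrix.mul_nonsing_inv _ hVdet, Matrix.one_mulVec]
        have h2 := congrFun this r
        rw [Matrix.mulVec, dotProduct] at h2
        rw [← h2]
        exact Finset.sum_congr rfl fun s _ => by rw [hVd, Matrix.vandermonde_apply]; ring
      -- the shifted generators
      set vsi : Fin m → Fin ℓ → (Fin ℓ → AdjoinRoot p) :=
        (fun s i0 => fun j => (AdjoinRoot.root p) ^ (s : ℕ) * AdjoinRoot.mk p (G i0 j)) with hvsi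
      have hvsiCR : ∀ s i0, vsi s i0 ∈ CRF := by
        intro s i0
        have : vsi s i0 = ((AdjoinRoot.root p) ^ (s : ℕ)) • (gen i0) := by
          funext j
          rw [hvsi, hgen]
          rfl
        rw [hCRF, Submodule.restrictScalars_mem, this]
        exact Submodule.smul_mem _ _ (Submodule.subset_span ⟨i0, rfl⟩)
      have hwsum : w = ∑ si : Fin m × Fin ℓ, lam si.2 si.1 • EVl (vsi si.1 si.2) := by
        funext r j
        have hEV : ∀ (s : Fin m) (i0 : Fin ℓ),
            EVl (vsi s i0) r j = ζ r ^ (s : ℕ) * aeval (ζ r) (G i0 j) := by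
          intro s i0
          rw [hEVapp, hvsi]
          simp only [map_mul, map_pow, AdjoinRoot.liftHom_root, AdjoinRoot.liftHom_mk]
        have h1 : (∑ si : Fin m × Fin ℓ, lam si.2 si.1 • EVl (vsi si.1 si.2)) r j
            = ∑ si : Fin m × Fin ℓ, lam si.2 si.1 * (ζ r ^ (si.1 : ℕ) * aeval (ζ r) (G si.2 j)) := by
          rw [Finset.sum_apply, Finset.sum_apply]
          exact Finset.sum_congr rfl fun si _ => by
            rw [Pi.smul_apply, Pi.smul_apply, smul_eq_mul, hEV]
        rw [h1, Fintype.sum_prod_type]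
        rw [Finset.sum_comm]
        have h2 : ∀ i0 : Fin ℓ, ∑ s : Fin m, lam i0 s * (ζ r ^ (s : ℕ) * aeval (ζ r) (G i0 j))
            = u r i0 * aeval (ζ r) (G i0 j) := by
          intro i0
          rw [← hlamv i0 r, Finset.sum_mul]
          exact Finset.sum_congr rfl fun s _ => by ring
        rw [Finset.sum_congr rfl fun i0 _ => h2 i0]
        have h3 := congrFun (hu r) j
        rw [Finset.sum_apply] at h3
        rw [← h3]
        exact Finset.sum_congr rfl fun i0 _ => by rw [Pi.smul_apply, smul_eq_mul]; rfl
      rw [hwsum]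
      refine Submodule.sum_mem _ fun si _ => Submodule.smul_mem _ _ (Submodule.subset_span ?_)
      exact ⟨vsi si.1 si.2, hvsiCR si.1 si.2, rfl⟩
  -- dimension of D
  have hDfin : Module.finrank K D = ∑ r, Module.finrank K (rs r) :=
    aux_finrank_submodule_pi rs
  have hrsrank : ∀ r, Module.finrank K (rs r) = (Gr r).rank := fun r =>
    ((Gr r).rank_eq_finrank_span_row).symm
  have hranknull : ∀ r, (Gr r).rank + Module.finrank K (LinearMap.ker (Gr r).mulVecLin) = ℓ := by
    intro r
    have h1 := LinearMap.finrank_range_add_finrank_ker ((Gr r).mulVecLin)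
    rw [Module.finrank_pi] at h1
    simpa [Matrix.rank] using h1
  -- kernel dimensions at the eigenvalues
  have hkere : ∀ i, Module.finrank K (LinearMap.ker (Gr (e i)).mulVecLin) = n i := by
    intro i
    have h1 : (Gr (e i)).mulVecLin
        = Matrix.mulVecLin (fun a b : Fin ℓ => aeval (β i) (G a b)) := by
      rw [hGr, ← he i]
      rfl
    rw [h1, ← hVsp i, finrank_span_eq_card (hVli i), Fintype.card_fin]
  have hker0 : ∀ r, r ∉ Set.range e → LinearMap.ker (Gr r).mulVecLin = ⊥ := by
    intro r hr
    have hdet : (Gr r).det ≠ 0 := by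
      intro h0
      have hdg : aeval (ζ r) G.det = 0 := by
        rw [← h0, AlgHom.map_det (aeval (ζ r)) G]
        rfl
      obtain ⟨i, hi⟩ := (hβ _).1 hdg
      exact hr ⟨i, hζinj (by rw [he i, hi])⟩
    rw [LinearMap.ker_eq_bot]
    intro x y hxy
    have := congrArg ((Gr r)⁻¹.mulVec) hxy
    rwa [Matrix.mulVecLin_apply, Matrix.mulVecLin_apply, Matrix.mulVec_mulVec,
      Matrix.mulVec_mulVec, Matrix.nonsing_inv_mul _ (isUnit_iff_ne_zero.2 hdet),
      Matrix.one_mulVec, Matrix.one_mulVec] at this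
  have hNsum : ∑ r, Module.finrank K (LinearMap.ker (Gr r).mulVecLin) = ∑ i, n i := by
    have h1 : ∑ i, n i
        = ∑ r ∈ Finset.univ.image e, Module.finrank K (LinearMap.ker (Gr r).mulVecLin) := by
      rw [Finset.sum_image (fun a _ b _ h => heinj h)]
      exact Finset.sum_congr rfl fun i _ => (hkere i).symm
    rw [h1]
    apply (Finset.sum_subset (Finset.subset_univ _) _).symm
    intro r _ hr
    rw [hker0 r (by simpa [Finset.mem_image] using hr), finrank_bot]
  have hDN : Module.finrank K D + ∑ i, n i = m * ℓ := by
    rw [hDfin, ← hNsum, ← Finset.sum_add_distrib]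
    have : ∀ r ∈ Finset.univ, Module.finrank K (rs r)
        + Module.finrank K (LinearMap.ker (Gr r).mulVecLin) = ℓ := by
      intro r _
      rw [hrsrank]
      exact hranknull r
    rw [Finset.sum_congr rfl this, Finset.sum_const, Finset.card_univ, Fintype.card_fin,
      smul_eq_mul]
  -- lower bound: finrank K D ≤ finrank F CRF
  haveI : Module.Finite F (Fin ℓ → K) := Module.Finite.pi
  haveI : Module.Finite F (Fin m → Fin ℓ → K) := Module.Finite.pi
  haveI : FiniteDimensional F Xs := FiniteDimensional.finiteDimensional_submodule Xs
  have hlow : Module.finrank K D ≤ Module.finrank F CRF := by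
    have h1 : Module.finrank F CRF = Module.finrank F Xs := by
      rw [hXs]
      exact (Submodule.equivMapOfInjective EVl hEVinj CRF).finrank_eq
    rw [h1, ← hXD]
    exact aux_finrank_spanK_le Xs
  -- the parity-check matrix H and its rank
  set Hm : Matrix ((i : Fin t) × Fin (n i)) (Fin m × Fin ℓ) K :=
    Matrix.of (fun pq q0 => β pq.1 ^ (q0.1 : ℕ) * V pq.1 pq.2 q0.2) with hHm
  have hHrank : Hm.rank = ∑ i, n i := by
    have hli : LinearIndependent K (fun pq => Hm pq) := by
      rw [Fintype.linearIndependent_iff]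
      intro g hg
      have hw : ∀ i j, (∑ a, g ⟨i, a⟩ * V i a j) = 0 := by
        have hkj : ∀ (k : Fin m) (j : Fin ℓ),
            ∑ i, (∑ a, g ⟨i, a⟩ * V i a j) * β i ^ (k : ℕ) = 0 := by
          intro k j
          have h2 := congrFun hg (k, j)
          rw [Finset.sum_apply] at h2
          simp only [Pi.smul_apply, smul_eq_mul, Pi.zero_apply] at h2
          rw [← Finset.univ_sigma_univ, Finset.sum_sigma] at h2
          rw [← h2]
          refine Finset.sum_congr rfl fun i _ => ?_
          rw [Finset.sum_mul]
          refine Finset.sum_congr rfl fun a _ => ?_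
          simp only [hHm, Matrix.of_apply]
          ring
        intro i j
        have hli2 : LinearIndependent K (fun i : Fin t => (fun k : Fin m => β i ^ (k : ℕ))) := by
          have h1 : LinearIndependent K (fun r : Fin m => Matrix.vandermonde ζ r) := by
            refine (Matrix.linearIndependent_rows_iff_isUnit (A := Matrix.vandermonde ζ)).2 ?_
            apply (Matrix.isUnit_iff_isUnit_det _).2
            rw [Matrix.det_vandermonde, isUnit_iff_ne_zero]
            apply Finset.prod_ne_zero_iff.2
            intro i1 _
            apply Finset.prod_ne_zero_iff.2
            intro j1 hj1
            rw [Finset.mem_Ioi] at hj1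
            exact sub_ne_zero.2 fun hc => absurd (hζinj hc) (ne_of_gt hj1)
          have h2 := h1.comp e heinj
          have h3 : (fun i : Fin t => (fun k : Fin m => β i ^ (k : ℕ)))
              = (fun r : Fin m => Matrix.vandermonde ζ r) ∘ e := by
            funext i k
            simp only [Function.comp_apply, Matrix.vandermonde_apply, he i]
          rw [h3]
          exact h2
        exact Fintype.linearIndependent_iff.1 hli2 (fun i => ∑ a, g ⟨i, a⟩ * V i a j)
          (by funext k; rw [Finset.sum_apply]; simpa using hkj k j) i
      intro pq
      obtain ⟨i, a⟩ := pq
      exact Fintype.linearIndependent_iff.1 (hVli i) (fun a => g ⟨i, a⟩)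
        (by funext j; rw [Finset.sum_apply]; simpa [mul_comm] using hw i j) a
    rw [hli.rank_matrix, Fintype.card_sigma]
    simp
  -- the coefficient linear isomorphism
  let Ml : (Fin m → Fin ℓ → F) →ₗ[F] (Fin ℓ → AdjoinRoot p) :=
    { toFun := fun c j => AdjoinRoot.mk p (toPoly fun k => c k j)
      map_add' := fun u v => by
        funext j
        show AdjoinRoot.mk p (toPoly fun k => (u + v) k j) = _
        have h1 : (fun k => (u + v) k j) = (fun k => u k j) + (fun k => v k j) := rfl
        rw [h1, toPoly_add, map_add]
        rfl
      map_smul' := fun a c => by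
        funext j
        show AdjoinRoot.mk p (toPoly fun k => (a • c) k j) = _
        have h1 : (fun k => (a • c) k j) = a • (fun k => c k j) := rfl
        rw [h1, toPoly_smul, map_mul, RingHom.id_apply]
        show _ = (a • fun j => AdjoinRoot.mk p (toPoly fun k => c k j)) j
        rw [Pi.smul_apply, Algebra.smul_def, AdjoinRoot.algebraMap_eq]
        rfl }
  have hMlapp : ∀ (c : Fin m → Fin ℓ → F) (j : Fin ℓ),
      Ml c j = AdjoinRoot.mk p (toPoly fun k => c k j) := fun _ _ => rfl
  have hMlinj : Function.Injective Ml := by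
    rw [← LinearMap.ker_eq_bot, Submodule.eq_bot_iff]
    intro c hc
    rw [LinearMap.mem_ker] at hc
    funext k j
    have hj := congrFun hc j
    rw [hMlapp] at hj
    have hdvd2 : p ∣ toPoly (fun k => c k j) := AdjoinRoot.mk_eq_zero.1 hj
    have h0 : toPoly (fun k => c k j) = 0 :=
      eq_zero_of_dvd_of_degree_lt hdvd2 (by rw [hpdeg]; exact toPoly_degree_lt _)
    have h2 : (toPoly fun k => c k j).coeff (k : ℕ) = 0 := by rw [h0]; simp
    rw [toPoly_coeff] at h2
    simpa [k.isLt] using h2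
  have hMlsurj : Function.Surjective Ml := by
    intro z
    refine ⟨fun k j => (AdjoinRoot.modByMonicHom hpm (z j)).coeff (k : ℕ), ?_⟩
    funext j
    rw [hMlapp]
    have hdeg2 : (AdjoinRoot.modByMonicHom hpm (z j)).degree < (m : ℕ) := by
      obtain ⟨f, hf⟩ := AdjoinRoot.mk_surjective (z j)
      rw [← hf, AdjoinRoot.modByMonicHom_mk, ← hpdeg]
      exact degree_modByMonic_lt f hpm
    rw [toPoly_coeff_eq_self hdeg2]
    exact AdjoinRoot.mk_leftInverse hpm (z j)
  set Cc : Submodule F (Fin m → Fin ℓ → F) := Submodule.comap Ml CRF with hCc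
  let Meq : (Fin m → Fin ℓ → F) ≃ₗ[F] (Fin ℓ → AdjoinRoot p) :=
    LinearEquiv.ofBijective Ml ⟨hMlinj, hMlsurj⟩
  have hCcCRF : Module.finrank F Cc = Module.finrank F CRF := by
    have h1 : Cc = Submodule.map (Meq.symm : (Fin ℓ → AdjoinRoot p) →ₗ[F] _) CRF := by
      rw [hCc, ← Submodule.comap_equiv_eq_map_symm]
      rfl
    rw [h1]
    exact LinearEquiv.finrank_map_eq Meq.symm CRF
  -- the parity check map L
  let L : (Fin m → Fin ℓ → F) →ₗ[F] ((i : Fin t) × Fin (n i) → K) :=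
    { toFun := fun c pq => ∑ k : Fin m, ∑ j : Fin ℓ,
        β pq.1 ^ (k : ℕ) * V pq.1 pq.2 j * algebraMap F K (c k j)
      map_add' := fun u v => by
        funext pq
        show (∑ k : Fin m, ∑ j : Fin ℓ,
            β pq.1 ^ (k : ℕ) * V pq.1 pq.2 j * algebraMap F K ((u + v) k j)) = _
        simp only [Pi.add_apply, map_add, mul_add, Finset.sum_add_distrib]
      map_smul' := fun a c => by
        funext pq
        show (∑ k : Fin m, ∑ j : Fin ℓ,
            β pq.1 ^ (k : ℕ) * V pq.1 pq.2 j * algebraMap F K ((a • c) k j)) = _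
        have h1 : ∀ (k : Fin m) (j : Fin ℓ), algebraMap F K ((a • c) k j)
            = algebraMap F K a * algebraMap F K (c k j) := fun k j => by
          rw [Pi.smul_apply, Pi.smul_apply, smul_eq_mul, map_mul]
        simp only [h1]
        rw [RingHom.id_apply]
        show _ = (a • fun pq' => (∑ k : Fin m, ∑ j : Fin ℓ,
            β pq'.1 ^ (k : ℕ) * V pq'.1 pq'.2 j * algebraMap F K (c k j))) pq
        rw [Pi.smul_apply, Algebra.smul_def, Finset.mul_sum]
        refine Finset.sum_congr rfl fun k _ => ?_
        rw [Finset.mul_sum]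
        exact Finset.sum_congr rfl fun j _ => by ring }
  have hL0 : ∀ c : Fin m → Fin ℓ → F, (L c = 0 ↔ ∀ (i : Fin t) (a : Fin (n i)),
      ∑ k : Fin m, ∑ j : Fin ℓ, β i ^ (k : ℕ) * V i a j * algebraMap F K (c k j) = 0) := by
    intro c
    constructor
    · intro h i a
      exact congrFun h ⟨i, a⟩
    · intro h
      funext pq
      obtain ⟨i, a⟩ := pq
      exact h i a
  have hrearr : ∀ (c : Fin m → Fin ℓ → F) (i : Fin t) (a : Fin (n i)),
      (∑ k : Fin m, ∑ j : Fin ℓ, β i ^ (k : ℕ) * V i a j * algebraMap F K (c k j))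
        = ∑ j, V i a j * (AdjoinRoot.liftHom p (β i) (haev _ (hβm i))) (Ml c j) := by
    intro c i a
    rw [Finset.sum_comm]
    refine Finset.sum_congr rfl fun j _ => ?_
    rw [hMlapp, hEVpoly, Finset.mul_sum]
    exact Finset.sum_congr rfl fun k _ => by ring
  have hCcker : Cc ≤ LinearMap.ker L := by
    intro c hc
    rw [LinearMap.mem_ker, hL0]
    intro i a
    rw [hrearr]
    exact hP1 (Ml c) hc i a
  -- lower bound on the rank of L
  haveI : Module.Finite F ((i : Fin t) × Fin (n i) → K) := Module.Finite.pi
  haveI : FiniteDimensional F (LinearMap.range L) :=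
    FiniteDimensional.finiteDimensional_submodule _
  have hrangeL : ∑ i, n i ≤ Module.finrank F (LinearMap.range L) := by
    have hsub : LinearMap.range Hm.mulVecLin
        ≤ Submodule.span K ((LinearMap.range L : Submodule F _) : Set _) := by
      rintro y ⟨x, rfl⟩
      have hy : Hm.mulVecLin x = ∑ q0 : Fin m × Fin ℓ, x q0 • (fun pq => Hm pq q0) := by
        funext pq
        rw [Finset.sum_apply]
        simp only [Pi.smul_apply, smul_eq_mul]
        rw [Matrix.mulVecLin_apply, Matrix.mulVec, dotProduct]
        exact Finset.sum_congr rfl fun q0 _ => by ring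
      rw [hy]
      refine Submodule.sum_mem _ fun q0 _ => Submodule.smul_mem _ _ (Submodule.subset_span ?_)
      refine ⟨fun k j => if k = q0.1 ∧ j = q0.2 then 1 else 0, ?_⟩
      funext pq
      show (∑ k : Fin m, ∑ j : Fin ℓ, β pq.1 ^ (k : ℕ) * V pq.1 pq.2 j
          * algebraMap F K (if k = q0.1 ∧ j = q0.2 then 1 else 0)) = Hm pq q0
      simp only [apply_ite (algebraMap F K), map_one, map_zero, mul_ite, mul_one, mul_zero,
        ite_and]
      rw [Finset.sum_eq_single q0.1, Finset.sum_eq_single q0.2]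
      · simp [hHm]
      · intro b _ hb
        simp [hb]
      · intro hb
        exact absurd (Finset.mem_univ _) hb
      · intro b _ hb
        rw [Finset.sum_eq_zero]
        intro j _
        simp [hb]
      · intro hb
        exact absurd (Finset.mem_univ _) hb
    have h1 : Hm.rank ≤ Module.finrank K
        (Submodule.span K ((LinearMap.range L : Submodule F ((i : Fin t) × Fin (n i) → K)) :
          Set ((i : Fin t) × Fin (n i) → K))) := by
      rw [Matrix.rank]
      exact Submodule.finrank_mono hsub
    have h2 := aux_finrank_spanK_le (K := K) (LinearMap.range L)
    exact hHrank ▸ (h1.trans h2)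
  -- rank-nullity for L
  haveI : Module.Finite F (Fin ℓ → F) := Module.Finite.pi
  haveI : FiniteDimensional F (Fin m → Fin ℓ → F) := Module.Finite.pi
  have hLnull : Module.finrank F (LinearMap.range L) + Module.finrank F (LinearMap.ker L)
      = m * ℓ := by
    rw [LinearMap.finrank_range_add_finrank_ker L, Module.finrank_pi_fintype]
    have : ∀ k : Fin m, Module.finrank F (Fin ℓ → F) = ℓ := fun _ => by
      rw [Module.finrank_pi, Fintype.card_fin]
    rw [Finset.sum_congr rfl fun k _ => this k, Finset.sum_const, Finset.card_univ,
      Fintype.card_fin, smul_eq_mul]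
  have hfCc : Module.finrank F Cc ≤ Module.finrank F (LinearMap.ker L) :=
    Submodule.finrank_mono hCcker
  have hlow2 : Module.finrank K D ≤ Module.finrank F Cc := by rw [hCcCRF]; exact hlow
  have hCcval : Module.finrank F Cc + ∑ i, n i = m * ℓ := by omega
  have hCceq : Cc = LinearMap.ker L := Submodule.eq_of_le_of_finrank_le hCcker (by omega)
  -- the three statements
  have hfrCR : Module.finrank F CRF
      = Module.finrank F (Submodule.span (AdjoinRoot p)
          (Set.range fun i : Fin ℓ => fun j : Fin ℓ => AdjoinRoot.mk p (G i j))) := rfl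
  refine ⟨?_, ?_, ?_⟩
  · intro c hc i a
    have hc' : c ∈ Cc := hc
    have := hCceq ▸ hc'
    rw [LinearMap.mem_ker, hL0] at this
    exact this i a
  · show Hm.rank = m * ℓ - Module.finrank F _
    rw [hHrank, ← hfrCR, ← hCcCRF]
    omega
  · intro c
    constructor
    · intro hc i a
      have hc' : c ∈ Cc := hc
      have := hCceq ▸ hc'
      rw [LinearMap.mem_ker, hL0] at this
      exact this i a
    · intro hsum
      have : c ∈ LinearMap.ker L := by rw [LinearMap.mem_ker, hL0]; exact hsum
      rw [← hCceq] at this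
      exact this
end

section
/- (Duality of constituents) Let C be a QC code with CRT decomposition C ≅ (⊕_{i=1}^n C_i) ⊕ (⊕_{t=1}^p (C'_t ⊕ C''_t)), where the C_i correspond to self-reciprocal irreducible factors g_i of x^m−1 and (C'_t, C''_t) to reciprocal pairs (h_t, h_t*). Then the Euclidean dual C^⊥ decomposes as (⊕_i C_i^{⊥_G}) ⊕ (⊕_t ((C''_t)^{⊥_e} ⊕ (C'_t)^{⊥_e})), where ⊥_G denotes the Hermitian dual on G_i^ℓ (Euclidean when G_i = F_q) and ⊥_e the Euclidean dual. -/
set_option maxHeartbeats 1000000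

open Polynomial

/-- The natural reduction map `F[x]/⟨f₁⟩ → F[x]/⟨f₂⟩` when `f₂ ∣ f₁`. -/
noncomputable def projMod {F : Type*} [Field F] (f₁ f₂ : Polynomial F) (h : f₂ ∣ f₁) :
    AdjoinRoot f₁ →+* AdjoinRoot f₂ :=
  AdjoinRoot.lift (AdjoinRoot.of f₂) (AdjoinRoot.root f₂) (by
    have h0 : (AdjoinRoot.mk f₂) f₁ = 0 := AdjoinRoot.mk_eq_zero.mpr h
    rwa [← AdjoinRoot.aeval_eq, Polynomial.aeval_def] at h0)

/-- A codeword array, viewed as an element of `R^ℓ` via column polynomials. -/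
noncomputable def toR {F : Type*} [Field F] {m ℓ : ℕ} (c : Fin m → Fin ℓ → F) :
    Fin ℓ → AdjoinRoot (X ^ m - C 1 : Polynomial F) :=
  fun j => AdjoinRoot.mk _ (toPoly fun i => c i j)

/-- The set of codeword arrays of a QC code `Cs ⊆ R^ℓ`. -/
noncomputable def arrSet {F : Type*} [Field F] {m ℓ : ℕ}
    (Cs : Submodule (AdjoinRoot (X ^ m - C 1 : Polynomial F))
      (Fin ℓ → AdjoinRoot (X ^ m - C 1 : Polynomial F))) : Set (Fin m → Fin ℓ → F) :=
  {c | toR c ∈ Cs}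

/-- The Euclidean dual of a QC code, at the level of `m × ℓ` arrays over `F`. -/
noncomputable def dualArr {F : Type*} [Field F] {m ℓ : ℕ}
    (Cs : Submodule (AdjoinRoot (X ^ m - C 1 : Polynomial F))
      (Fin ℓ → AdjoinRoot (X ^ m - C 1 : Polynomial F))) : Set (Fin m → Fin ℓ → F) :=
  {d | ∀ c ∈ arrSet Cs, ∑ i, ∑ j, c i j * d i j = 0}

/-- The constituent of a set of codeword arrays at an irreducible factor `f₂` of
`x^m − 1`: the image of the code in `(F[x]/⟨f₂⟩)^ℓ` under reduction mod `f₂`. -/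
noncomputable def constSet {F : Type*} [Field F] {m ℓ : ℕ} (f₂ : Polynomial F)
    (h : f₂ ∣ X ^ m - C 1) (S : Set (Fin m → Fin ℓ → F)) :
    Set (Fin ℓ → AdjoinRoot f₂) :=
  (fun c => fun j => projMod (X ^ m - C 1) f₂ h (toR c j)) '' S

/-
Identify an array `c : F^(m×ℓ)` with `toR c ∈ R^ℓ`, where `R = F[x]/⟨x^m - 1⟩`, and let `u ↦ ū` be
the involution of `R` induced by `x ↦ x⁻¹`. The dot product of `a, b ∈ F^m` is the constant
coefficient of `a(x) · b̄(x)`; this functional is nondegenerate and `C` is an `R`-module, so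
`d ∈ C^⊥` iff `∑ⱼ cⱼ d̄ⱼ = 0` in `R` for every `c ∈ C`.

Reduction modulo a factor `f₀` of `x^m - 1` turns the involution into a ring map
`τ : F[x]/⟨f₁⟩ → F[x]/⟨f₀⟩`, where `f₁` is the factor whose roots are the inverses of those of
`f₀`. Projecting the relation above gives one inclusion between the `f₀`-constituent of `C^⊥` and
the `τ`-twisted dual of the `f₁`-constituent of `C`. For the other, `x^m - 1` is squarefree, so
there is an `e ∈ R` with `e ≡ 1 mod f₀` and `e · ⟨f₀⟩ = 0`; multiplying any lift of a candidate
by `e` gives a genuine word of `C^⊥`.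

For a reciprocal pair, `τ` is the given identification `σ` or its inverse. For a self-reciprocal
irreducible `g`, `τ` is the automorphism `θ ↦ θ⁻¹` of `F[x]/⟨g⟩`. It is an involution in the cyclic
Galois group generated by Frobenius, so it equals Frobenius raised to the power `deg g / 2`.
-/

theorem pow_pred_pow_pred {M : Type*} [Monoid M] {m : ℕ} {x : M} (hm : 0 < m) (hx : x ^ m = 1) :
    (x ^ (m - 1)) ^ (m - 1) = x := by
  refine left_inv_eq_right_inv (a := x ^ (m - 1)) ?_ ?_
  · rw [← pow_succ, Nat.sub_add_cancel hm, ← pow_mul, mul_comm, pow_mul, hx, one_pow]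
  · rw [← pow_succ, Nat.sub_add_cancel hm, hx]

theorem Nat.dvd_add_pred_mul_iff {m i k : ℕ} (hi : i < m) (hk : k < m) :
    m ∣ i + (m - 1) * k ↔ i = k := by
  zify [show 1 ≤ m by omega]
  rw [show (i : ℤ) + (m - 1) * k = i - k + m * k by ring, dvd_add_left (dvd_mul_right _ _)]
  refine ⟨fun h => ?_, fun h => by simp [h]⟩
  have := Int.eq_zero_of_abs_lt_dvd h (by rw [abs_lt]; omega)
  omega

theorem sum_map_mul_eq_zero_iff {ι A B : Type*} [Fintype ι] [CommRing A] [CommRing B]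
    (σ : A →+* B) (σ' : B →+* A) (hσ : ∀ b, σ (σ' b) = b) (hσ' : ∀ a, σ' (σ a) = a)
    (a : ι → B) (b : ι → A) : ∑ j, σ' (a j) * b j = 0 ↔ ∑ j, a j * σ (b j) = 0 := by
  constructor <;> intro h
  · simpa [hσ] using congrArg σ h
  · simpa [hσ'] using congrArg σ' h

namespace AdjoinRoot

variable {F : Type*} [Field F]

theorem eval₂_root_eq_zero_of_dvd {g P : F[X]} (h : g ∣ P) : P.eval₂ (of g) (root g) = 0 := by
  obtain ⟨k, rfl⟩ := h
  rw [eval₂_mul, eval₂_root, zero_mul]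

theorem root_ne_zero_of_associated_reverse {g : F[X]} [Fact (Irreducible g)]
    (hrev : Associated g.reverse g) : root g ≠ 0 := by
  intro h0
  have := eval₂_root_eq_zero_of_dvd hrev.symm.dvd
  rw [h0, eval₂_at_zero, coeff_zero_reverse, map_eq_zero_iff _ (of g).injective,
    leadingCoeff_eq_zero] at this
  exact (Fact.out : Irreducible g).ne_zero this

theorem eval₂_root_inv_of_associated_reverse {g : F[X]} [Fact (Irreducible g)]
    (hrev : Associated g.reverse g) : g.eval₂ (of g) (root g)⁻¹ = 0 := by
  have hθ := root_ne_zero_of_associated_reverse hrev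
  let := invertibleOfNonzero (inv_ne_zero hθ)
  rw [← eval₂_reverse_eq_zero_iff, invOf_eq_inv, inv_inv]
  exact eval₂_root_eq_zero_of_dvd hrev.symm.dvd

theorem root_pow_eq_one_of_dvd {m : ℕ} {f : F[X]} (h : f ∣ X ^ m - C 1) :
    root f ^ m = 1 := by
  have := mk_eq_zero.mpr h
  rwa [map_sub, map_pow, mk_X, mk_C, map_one, sub_eq_zero] at this

theorem root_pow_pred_mul_root {m : ℕ} {f : F[X]} (hm : 0 < m) (h : f ∣ X ^ m - C 1) :
    root f ^ (m - 1) * root f = 1 := by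
  rw [← pow_succ, Nat.sub_add_cancel hm, root_pow_eq_one_of_dvd h]

theorem natDegree_le_one_of_root_mul_self {g : F[X]} [Fact (Irreducible g)]
    (h : root g * root g = 1) : g.natDegree ≤ 1 := by
  have hdvd : g ∣ (X - C 1) * (X + C 1) := by
    rw [← mk_eq_zero, map_mul, map_sub, map_add, mk_X, mk_C, map_one]
    linear_combination h
  rcases (Fact.out : Irreducible g).prime.dvd_or_dvd hdvd with h1 | h1
  · exact (natDegree_le_of_dvd h1 (X_sub_C_ne_zero 1)).trans (natDegree_X_sub_C 1).le
  · exact (natDegree_le_of_dvd h1 (X_add_C_ne_zero 1)).trans (natDegree_X_add_C 1).le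

variable (g : F[X]) [Fact (Irreducible g)] (hrev : Associated g.reverse g)

noncomputable def invRootAlgHom : AdjoinRoot g →ₐ[F] AdjoinRoot g :=
  liftAlgHom g (Algebra.ofId F _) (root g)⁻¹ (eval₂_root_inv_of_associated_reverse hrev)

variable {g}

@[simp]
theorem invRootAlgHom_root : invRootAlgHom g hrev (root g) = (root g)⁻¹ :=
  liftAlgHom_root ..

theorem invRootAlgHom_mul_self : invRootAlgHom g hrev * invRootAlgHom g hrev = 1 :=
  algHom_ext (by simp)

theorem invRootAlgHom_eq_frobeniusAlgHom_pow [Fintype F] :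
    invRootAlgHom g hrev = FiniteField.frobeniusAlgHom F (AdjoinRoot g) ^ (g.natDegree / 2) := by
  have hg : g ≠ 0 := (Fact.out : Irreducible g).ne_zero
  have hrank : Module.finrank F (AdjoinRoot g) = g.natDegree :=
    (powerBasis hg).finrank.trans (powerBasis_dim hg)
  have := (powerBasis hg).finite
  have : Finite (AdjoinRoot g) := Module.finite_of_finite F
  obtain ⟨⟨k, hk⟩, hkτ⟩ := (FiniteField.bijective_frobeniusAlgHom_pow F (AdjoinRoot g)).2
    (invRootAlgHom g hrev)
  simp only at hkτ
  rw [hrank] at hk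
  rw [← hkτ]
  congr 1
  have hdvd : g.natDegree ∣ k * 2 := by
    rw [← hrank, ← FiniteField.orderOf_frobeniusAlgHom]
    apply orderOf_dvd_of_pow_eq_one
    rw [pow_mul, hkτ, sq, invRootAlgHom_mul_self]
  obtain ⟨c, hc⟩ := hdvd
  have hc2 : c < 2 := by nlinarith
  -- `2k ∈ {0, deg g}`; in the first case `θ⁻¹ = θ`, which forces `deg g ≤ 1`.
  interval_cases c
  · have hk0 : k = 0 := by omega
    subst hk0
    have hθ : (root g)⁻¹ = root g := by
      rw [← invRootAlgHom_root hrev, ← hkτ, pow_zero, AlgHom.one_apply]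
    have := natDegree_le_one_of_root_mul_self (g := g) (by
      conv_lhs => arg 2; rw [← hθ]
      exact mul_inv_cancel₀ (root_ne_zero_of_associated_reverse hrev))
    omega
  · omega

theorem invRootAlgHom_apply [Fintype F] (y : AdjoinRoot g) :
    invRootAlgHom g hrev y = y ^ Fintype.card F ^ (g.natDegree / 2) := by
  rw [invRootAlgHom_eq_frobeniusAlgHom_pow, AlgHom.coe_pow, FiniteField.coe_frobeniusAlgHom,
    pow_iterate]

end AdjoinRoot

section QuasiCyclic

variable {F : Type*} [Field F] {m : ℕ}

open AdjoinRoot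

section projMod

variable {f₁ f₂ : F[X]} (h : f₂ ∣ f₁)

theorem projMod_mk (P : F[X]) : projMod f₁ f₂ h (mk f₁ P) = mk f₂ P :=
  (lift_mk _ P).trans (by rw [← aeval_eq, aeval_def]; rfl)

theorem projMod_of (x : F) : projMod f₁ f₂ h (of f₁ x) = of f₂ x :=
  lift_of _

theorem projMod_root : projMod f₁ f₂ h (root f₁) = root f₂ :=
  lift_root _

theorem projMod_surjective : Function.Surjective (projMod f₁ f₂ h) := by
  intro u
  obtain ⟨P, rfl⟩ := mk_surjective u
  exact ⟨mk _ P, projMod_mk h P⟩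

end projMod

variable (F m) in
noncomputable def conjR : AdjoinRoot (X ^ m - C 1 : F[X]) →+* AdjoinRoot (X ^ m - C 1 : F[X]) :=
  lift (of _) (root _ ^ (m - 1)) (by
    rw [eval₂_sub, eval₂_X_pow, eval₂_C, ← pow_mul, mul_comm, pow_mul,
      root_pow_eq_one_of_dvd dvd_rfl, one_pow]
    simp)

@[simp]
theorem conjR_of (x : F) : conjR F m (of _ x) = of _ x :=
  lift_of _

@[simp]
theorem conjR_root : conjR F m (root _) = root _ ^ (m - 1) :=
  lift_root _

theorem conjR_conjR (hm : 0 < m) (u : AdjoinRoot (X ^ m - C 1 : F[X])) :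
    conjR F m (conjR F m u) = u := by
  suffices (conjR F m).comp (conjR F m) = RingHom.id _ from congr($this u)
  refine ringHom_ext (RingHom.ext fun x => by simp) ?_
  simp [pow_pred_pow_pred hm (root_pow_eq_one_of_dvd dvd_rfl)]

theorem projMod_conjR (hm : 0 < m) {f₀ f₁ : F[X]} (h₀ : f₀ ∣ X ^ m - C 1) (h₁ : f₁ ∣ X ^ m - C 1)
    (τ : AdjoinRoot f₁ →+* AdjoinRoot f₀) (hτF : ∀ x, τ (of f₁ x) = of f₀ x)
    (hτroot : τ (root f₁) * root f₀ = 1) (u : AdjoinRoot (X ^ m - C 1 : F[X])) :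
    projMod _ f₀ h₀ (conjR F m u) = τ (projMod _ f₁ h₁ u) := by
  suffices (projMod _ f₀ h₀).comp (conjR F m) = τ.comp (projMod _ f₁ h₁) from congr($this u)
  refine ringHom_ext (RingHom.ext fun x => by simp [projMod_of, hτF]) ?_
  simp only [RingHom.comp_apply, conjR_root, map_pow, projMod_root]
  exact left_inv_eq_right_inv (root_pow_pred_mul_root hm h₀) (by rwa [mul_comm])

variable (F m) in
noncomputable def constCoeffR (hm : 0 < m) : AdjoinRoot (X ^ m - C 1 : F[X]) →ₗ[F] F :=
  (lcoeff F 0).comp (modByMonicHom (monic_X_pow_sub_C 1 hm.ne'))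

theorem constCoeffR_root_pow (hm : 0 < m) (k : ℕ) :
    constCoeffR F m hm (root _ ^ k) = if m ∣ k then 1 else 0 := by
  have hred : root (X ^ m - C 1 : F[X]) ^ k = mk _ (X ^ (k % m)) := by
    conv_lhs => rw [← Nat.div_add_mod k m]
    rw [pow_add, pow_mul, root_pow_eq_one_of_dvd dvd_rfl, one_pow, one_mul, map_pow, mk_X]
  have hdeg : (X ^ (k % m) : F[X]).degree < (X ^ m - C 1 : F[X]).degree := by
    rw [degree_X_pow, degree_X_pow_sub_C hm]
    exact_mod_cast Nat.mod_lt k hm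
  rw [hred, constCoeffR, LinearMap.comp_apply, modByMonicHom_mk,
    (modByMonic_eq_self_iff (monic_X_pow_sub_C 1 hm.ne')).mpr hdeg, lcoeff_apply, coeff_X_pow]
  exact if_congr (by rw [Nat.dvd_iff_mod_eq_zero, eq_comm]) rfl rfl

theorem mk_toPoly (v : Fin m → F) :
    mk (X ^ m - C 1) (toPoly v) = ∑ i, v i • root (X ^ m - C 1) ^ (i : ℕ) := by
  simp [toPoly, Algebra.smul_def]

theorem conjR_mk_toPoly (v : Fin m → F) :
    conjR F m (mk _ (toPoly v)) = ∑ i, v i • root (X ^ m - C 1) ^ ((m - 1) * i) := by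
  simp [mk_toPoly, Algebra.smul_def, pow_mul, AdjoinRoot.algebraMap_eq]

theorem sum_mul_eq_constCoeffR (hm : 0 < m) (a b : Fin m → F) :
    ∑ i, a i * b i = constCoeffR F m hm (mk _ (toPoly a) * conjR F m (mk _ (toPoly b))) := by
  rw [conjR_mk_toPoly, mk_toPoly]
  simp only [Finset.sum_mul_sum, smul_mul_smul_comm, ← pow_add,
    map_sum, map_smul, constCoeffR_root_pow hm, Nat.dvd_add_pred_mul_iff (Fin.is_lt _)
    (Fin.is_lt _), Fin.val_inj, smul_eq_mul, mul_ite, mul_one, mul_zero, Finset.sum_ite_eq,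
    Finset.mem_univ, if_true]

theorem exists_mk_toPoly_eq (hm : 0 < m) (u : AdjoinRoot (X ^ m - C 1 : F[X])) :
    ∃ v : Fin m → F, mk _ (toPoly v) = u := by
  have hmonic := monic_X_pow_sub_C (1 : F) hm.ne'
  set P := modByMonicHom hmonic u
  have hdeg : P.natDegree < m := by
    obtain ⟨Q, rfl⟩ := mk_surjective u
    have hdegM := natDegree_X_pow_sub_C (n := m) (r := (1 : F))
    have hne : X ^ m - C 1 ≠ (1 : F[X]) := fun h1 => by
      rw [h1, natDegree_one] at hdegM
      omega
    have := natDegree_modByMonic_lt Q hmonic hne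
    rwa [hdegM, ← modByMonicHom_mk hmonic] at this
  refine ⟨fun i => P.coeff i, ?_⟩
  have hP : toPoly (fun i : Fin m => P.coeff i) = P := by
    conv_rhs => rw [as_sum_range_C_mul_X_pow' P hdeg, Finset.sum_range]
    rfl
  rw [hP]
  exact mk_leftInverse hmonic u

theorem toR_surjective (hm : 0 < m) {ℓ : ℕ} :
    Function.Surjective (toR (F := F) (m := m) (ℓ := ℓ)) := by
  intro v
  choose w hw using fun j => exists_mk_toPoly_eq hm (v j)
  exact ⟨fun i j => w j i, funext hw⟩

theorem eq_zero_of_forall_constCoeffR_mul_eq_zero (hm : 0 < m)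
    {u : AdjoinRoot (X ^ m - C 1 : F[X])} (h : ∀ s, constCoeffR F m hm (s * u) = 0) : u = 0 := by
  obtain ⟨b, hb⟩ := exists_mk_toPoly_eq hm (conjR F m u)
  have hb0 : b = 0 := funext fun i => by
    have := h (mk _ (toPoly (Pi.single i 1)))
    rw [← conjR_conjR hm u, ← hb, ← sum_mul_eq_constCoeffR] at this
    simpa [Pi.single_apply] using this
  rw [← conjR_conjR hm u, ← hb, hb0]
  simp [toPoly]

theorem mem_dualArr_iff (hm : 0 < m) {ℓ : ℕ}
    (Cs : Submodule (AdjoinRoot (X ^ m - C 1 : F[X])) (Fin ℓ → AdjoinRoot (X ^ m - C 1 : F[X])))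
    (d : Fin m → Fin ℓ → F) :
    d ∈ dualArr Cs ↔ ∀ c ∈ Cs, ∑ j, c j * conjR F m (toR d j) = 0 := by
  have hsum : ∀ c : Fin m → Fin ℓ → F,
      ∑ i, ∑ j, c i j * d i j = constCoeffR F m hm (∑ j, toR c j * conjR F m (toR d j)) := by
    intro c
    rw [Finset.sum_comm, map_sum]
    exact Finset.sum_congr rfl fun j _ => sum_mul_eq_constCoeffR hm _ _
  refine ⟨fun hd c hc => eq_zero_of_forall_constCoeffR_mul_eq_zero hm fun s => ?_,
    fun hd c hc => by rw [hsum, hd _ hc, map_zero]⟩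
  obtain ⟨c', hc'⟩ := toR_surjective hm (s • c)
  have := hd c' (show toR c' ∈ Cs from hc' ▸ Cs.smul_mem s hc)
  rw [hsum, hc'] at this
  simpa [Finset.mul_sum, mul_assoc] using this

theorem exists_projMod_eq_one_and_mul_eq_zero {f₀ f : F[X]} (hsq : Squarefree f) (h₀ : f₀ ∣ f) :
    ∃ e, projMod f f₀ h₀ e = 1 ∧ ∀ w, projMod f f₀ h₀ w = 0 → e * w = 0 := by
  obtain ⟨Q, hQ⟩ := h₀
  obtain ⟨a, b, hab⟩ := (squarefree_mul_iff.mp (hQ ▸ hsq)).1.isCoprime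
  refine ⟨mk f (b * Q), ?_, fun w hw => ?_⟩
  · rw [projMod_mk, ← map_one (mk f₀), ← hab, map_add, map_mul (mk f₀) a, mk_self, mul_zero,
      zero_add]
  · obtain ⟨W, rfl⟩ := mk_surjective w
    obtain ⟨k, rfl⟩ := mk_eq_zero.mp ((projMod_mk _ W).symm.trans hw)
    rw [← map_mul, mk_eq_zero, hQ]
    exact ⟨b * k, by ring⟩

theorem constSet_dualArr (hm : 0 < m) (hsq : Squarefree (X ^ m - C 1 : F[X])) {ℓ : ℕ}
    (Cs : Submodule (AdjoinRoot (X ^ m - C 1 : F[X])) (Fin ℓ → AdjoinRoot (X ^ m - C 1 : F[X])))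
    {f₀ f₁ : F[X]} (h₀ : f₀ ∣ X ^ m - C 1) (h₁ : f₁ ∣ X ^ m - C 1)
    (τ : AdjoinRoot f₁ →+* AdjoinRoot f₀)
    (hτ : ∀ u, projMod _ f₀ h₀ (conjR F m u) = τ (projMod _ f₁ h₁ u)) :
    constSet f₀ h₀ (dualArr Cs) =
      {d' | ∀ cc ∈ constSet f₁ h₁ (arrSet Cs), ∑ j, τ (cc j) * d' j = 0} := by
  ext d'
  constructor
  · rintro ⟨d, hd, rfl⟩ cc ⟨c, hc, rfl⟩
    have := congrArg (fun u => projMod _ f₀ h₀ (conjR F m u))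
      ((mem_dualArr_iff hm Cs d).mp hd _ hc)
    simpa [conjR_conjR hm, hτ] using this
  · intro hd'
    obtain ⟨e, he1, he0⟩ := exists_projMod_eq_one_and_mul_eq_zero hsq h₀
    choose z hz using fun j => projMod_surjective h₀ (d' j)
    obtain ⟨d, hd⟩ := toR_surjective hm (fun j => e * z j)
    refine ⟨d, (mem_dualArr_iff hm Cs d).mpr fun c hc => ?_, funext fun j => by simp [hd, he1, hz]⟩
    obtain ⟨c, rfl⟩ := toR_surjective hm c
    have hw : projMod _ f₀ h₀ (∑ j, conjR F m (toR c j) * z j) = 0 := by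
      simpa [hτ, hz] using hd' _ ⟨c, hc, rfl⟩
    calc ∑ j, toR c j * conjR F m (toR d j)
        = conjR F m (e * ∑ j, conjR F m (toR c j) * z j) := by
          simp [hd, Finset.mul_sum, conjR_conjR hm, mul_left_comm]
      _ = 0 := by rw [he0 _ hw, map_zero]

end QuasiCyclic

theorem stmt15_general (F : Type*) [Field F] [Fintype F] (m ℓ n p : ℕ) (hm : 0 < m)
    -- gcd(m, q) = 1
    (hmq : (m : F) ≠ 0)
    -- the factorization x^m − 1 = g₁⋯g_n · h₁h₁*⋯h_p h_p* with g_i self-reciprocal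
    -- irreducible and h_t, h_t* = reverse(h_t) a reciprocal pair of irreducibles
    (g : Fin n → Polynomial F) (h : Fin p → Polynomial F)
    (hgirr : ∀ i, Irreducible (g i))
    (hgself : ∀ i, Associated ((g i).reverse) (g i))
    (hgd : ∀ i, g i ∣ X ^ m - C 1) (hhd : ∀ t, h t ∣ X ^ m - C 1)
    (hh'd : ∀ t, (h t).reverse ∣ X ^ m - C 1)
    -- the canonical identification H''_t = H'_t (both are F(ξ^{a_t}) = F(ξ^{−a_t})),
    -- fixing F and sending the root of h_t* to the inverse of the root of h_t
    (σ : ∀ t, AdjoinRoot ((h t).reverse) ≃+* AdjoinRoot (h t))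
    (hσF : ∀ t (x : F), σ t (AdjoinRoot.of _ x) = AdjoinRoot.of _ x)
    (hσroot : ∀ t, σ t (AdjoinRoot.root ((h t).reverse)) * AdjoinRoot.root (h t) = 1)
    -- C a QC code of index ℓ
    (Cs : Submodule (AdjoinRoot (X ^ m - C 1 : Polynomial F))
      (Fin ℓ → AdjoinRoot (X ^ m - C 1 : Polynomial F))) :
    -- the g_i-constituent of C^⊥ is the Hermitian dual of C_i (with conjugation
    -- x ↦ x^(q^(deg g_i / 2)); for deg g_i = 1 this is the Euclidean dual)
    (∀ i, constSet (g i) (hgd i) (dualArr Cs) =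
      {d : Fin ℓ → AdjoinRoot (g i) | ∀ cc ∈ constSet (g i) (hgd i) (arrSet Cs),
        ∑ j, cc j * d j ^ (Fintype.card F ^ ((g i).natDegree / 2)) = 0}) ∧
    -- the h_t-constituent of C^⊥ is the Euclidean dual of C''_t
    (∀ t, constSet (h t) (hhd t) (dualArr Cs) =
      {d : Fin ℓ → AdjoinRoot (h t) |
        ∀ cc ∈ constSet ((h t).reverse) (hh'd t) (arrSet Cs),
          ∑ j, σ t (cc j) * d j = 0}) ∧
    -- the h_t*-constituent of C^⊥ is the Euclidean dual of C'_t
    (∀ t, constSet ((h t).reverse) (hh'd t) (dualArr Cs) =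
      {d : Fin ℓ → AdjoinRoot ((h t).reverse) |
        ∀ cc ∈ constSet (h t) (hhd t) (arrSet Cs),
          ∑ j, cc j * σ t (d j) = 0}) := by
  have hsq : Squarefree (X ^ m - C 1 : F[X]) :=
    (separable_X_pow_sub_C 1 hmq one_ne_zero).squarefree
  refine ⟨fun i => ?_, fun t => ?_, fun t => ?_⟩
  · have := Fact.mk (hgirr i)
    set τ := AdjoinRoot.invRootAlgHom (g i) (hgself i)
    have hττ (y) : τ (τ y) = y := congr($(AdjoinRoot.invRootAlgHom_mul_self (hgself i)) y)
    have hτroot : τ (AdjoinRoot.root (g i)) * AdjoinRoot.root (g i) = 1 := by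
      simp [τ, inv_mul_cancel₀ (AdjoinRoot.root_ne_zero_of_associated_reverse (hgself i))]
    rw [constSet_dualArr hm hsq Cs (hgd i) (hgd i) τ.toRingHom
      (projMod_conjR hm _ _ _ τ.commutes hτroot)]
    ext d'
    refine forall₂_congr fun cc _ => ?_
    simp_rw [← AdjoinRoot.invRootAlgHom_apply (hgself i)]
    exact sum_map_mul_eq_zero_iff τ.toRingHom τ.toRingHom hττ hττ _ _
  · exact constSet_dualArr hm hsq Cs (hhd t) (hh'd t) (σ t).toRingHom
      (projMod_conjR hm _ _ _ (hσF t) (hσroot t))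
  · have hσroot' : (σ t).symm (AdjoinRoot.root (h t)) * AdjoinRoot.root ((h t).reverse) = 1 :=
      (σ t).injective (by simpa [mul_comm] using hσroot t)
    rw [constSet_dualArr hm hsq Cs (hh'd t) (hhd t) (σ t).symm.toRingHom
      (projMod_conjR hm _ _ _ (fun x => (σ t).symm_apply_eq.mpr (hσF t x).symm) hσroot')]
    ext d'
    exact forall₂_congr fun cc _ => sum_map_mul_eq_zero_iff (σ t).toRingHom
      (σ t).symm.toRingHom (σ t).apply_symm_apply (σ t).symm_apply_apply _ _

theorem stmt15 (F : Type*) [Field F] [Fintype F] (m ℓ n p : ℕ) (hm : 0 < m)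
    -- gcd(m, q) = 1
    (hmq : (m : F) ≠ 0)
    -- the factorization x^m − 1 = g₁⋯g_n · h₁h₁*⋯h_p h_p* with g_i self-reciprocal
    -- irreducible and h_t, h_t* = reverse(h_t) a reciprocal pair of irreducibles
    (g : Fin n → Polynomial F) (h : Fin p → Polynomial F)
    (hgirr : ∀ i, Irreducible (g i)) (hhirr : ∀ t, Irreducible (h t))
    (hgself : ∀ i, Associated ((g i).reverse) (g i))
    (hhnotself : ∀ t, ¬ Associated ((h t).reverse) (h t))
    (hfact : Associated ((∏ i, g i) * ∏ t, h t * (h t).reverse) (X ^ m - C 1))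
    (hgd : ∀ i, g i ∣ X ^ m - C 1) (hhd : ∀ t, h t ∣ X ^ m - C 1)
    (hh'd : ∀ t, (h t).reverse ∣ X ^ m - C 1)
    -- the canonical identification H''_t = H'_t (both are F(ξ^{a_t}) = F(ξ^{−a_t})),
    -- fixing F and sending the root of h_t* to the inverse of the root of h_t
    (σ : ∀ t, AdjoinRoot ((h t).reverse) ≃+* AdjoinRoot (h t))
    (hσF : ∀ t (x : F), σ t (AdjoinRoot.of _ x) = AdjoinRoot.of _ x)
    (hσroot : ∀ t, σ t (AdjoinRoot.root ((h t).reverse)) * AdjoinRoot.root (h t) = 1)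
    -- C a QC code of index ℓ
    (Cs : Submodule (AdjoinRoot (X ^ m - C 1 : Polynomial F))
      (Fin ℓ → AdjoinRoot (X ^ m - C 1 : Polynomial F))) :
    -- the g_i-constituent of C^⊥ is the Hermitian dual of C_i (with conjugation
    -- x ↦ x^(q^(deg g_i / 2)); for deg g_i = 1 this is the Euclidean dual)
    (∀ i, constSet (g i) (hgd i) (dualArr Cs) =
      {d : Fin ℓ → AdjoinRoot (g i) | ∀ cc ∈ constSet (g i) (hgd i) (arrSet Cs),
        ∑ j, cc j * d j ^ (Fintype.card F ^ ((g i).natDegree / 2)) = 0}) ∧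
    -- the h_t-constituent of C^⊥ is the Euclidean dual of C''_t
    (∀ t, constSet (h t) (hhd t) (dualArr Cs) =
      {d : Fin ℓ → AdjoinRoot (h t) |
        ∀ cc ∈ constSet ((h t).reverse) (hh'd t) (arrSet Cs),
          ∑ j, σ t (cc j) * d j = 0}) ∧
    -- the h_t*-constituent of C^⊥ is the Euclidean dual of C'_t
    (∀ t, constSet ((h t).reverse) (hh'd t) (dualArr Cs) =
      {d : Fin ℓ → AdjoinRoot ((h t).reverse) |
        ∀ cc ∈ constSet (h t) (hhd t) (arrSet Cs),
          ∑ j, cc j * σ t (d j) = 0}) :=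
  stmt15_general F m ℓ n p hm hmq g h hgirr hgself hgd hhd hh'd σ hσF hσroot Cs
end
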